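/- Let m, n, r be nonnegative integers with 0 ≤ r < m. Then Σ_{j=1}^∞ (−1)^{j+1} · a_{r,m}(n − 3j(j+1)/2) = Σ_{j=0}^∞ (mj + r)·G(n − mj − r). -/

import Mathlib

noncomputable section

/-- `partitionCount n` is the number of partitions of `n`. -/
def partitionCount (n : ℕ) : ℕ := Nat.card (Nat.Partition n)

/-- `p` extended to `ℤ`, vanishing on negative arguments. -/
def pZ (x : ℤ) : ℤ := if 0 ≤ x then partitionCount x.toNat else 0

/-- `a r m n` is the sum of all different parts congruent to `r` mod `m`
in all partitions of `n` (each distinct part value counted once per partition). -/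
def a (r m n : ℕ) : ℕ :=
  ∑ l : Nat.Partition n, ∑ d ∈ l.parts.toFinset, if d % m = r then d else 0

/-- `a r m` extended to `ℤ`, vanishing on negative arguments. -/
def aZ (r m : ℕ) (x : ℤ) : ℤ := if 0 ≤ x then a r m x.toNat else 0

/-- `s m n` is the sum of different parts appearing at least `m` times
in all partitions of `n` (each such distinct part value counted once per partition). -/
def s (m n : ℕ) : ℕ :=
  ∑ l : Nat.Partition n, ∑ d ∈ l.parts.toFinset, if m ≤ l.parts.count d then d else 0

/-- `s m` extended to `ℤ`, vanishing on negative arguments. -/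
def sZ (m : ℕ) (x : ℤ) : ℤ := if 0 ≤ x then s m x.toNat else 0

/-- `peo n = p_e(n) - p_o(n)`: partitions with an even number of parts minus
partitions with an odd number of parts. -/
def peo (n : ℕ) : ℤ :=
  (Nat.card {l : Nat.Partition n // Even (Multiset.card l.parts)} : ℤ) -
    (Nat.card {l : Nat.Partition n // Odd (Multiset.card l.parts)} : ℤ)

/-- `peo` extended to `ℤ`, vanishing on negative arguments. -/
def peoZ (x : ℤ) : ℤ := if 0 ≤ x then peo x.toNat else 0

/-- Number of partitions of `n` into distinct parts, all odd. -/
def qodd (n : ℕ) : ℕ :=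
  Nat.card {l : Nat.Partition n // l.parts.Nodup ∧ ∀ d ∈ l.parts, Odd d}

/-- `qodd` extended to `ℤ`, vanishing on negative arguments. -/
def qoddZ (x : ℤ) : ℤ := if 0 ≤ x then qodd x.toNat else 0

/-- Number of partitions of `n` into distinct parts. -/
def q (n : ℕ) : ℕ := Nat.card {l : Nat.Partition n // l.parts.Nodup}

/-- `q(x/2)`, set to `0` whenever `x/2` is not a nonnegative integer. -/
def qHalfZ (x : ℤ) : ℤ := if 0 ≤ x ∧ 2 ∣ x then q (x.toNat / 2) else 0

/-- The rank of a partition: its largest part minus its number of parts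
(the empty partition has rank 0). -/
def rank {n : ℕ} (l : Nat.Partition n) : ℤ :=
  (l.parts.sup : ℤ) - Multiset.card l.parts

/-- Number of partitions of `n` with nonnegative rank. -/
def N (n : ℕ) : ℕ := Nat.card {l : Nat.Partition n // 0 ≤ rank l}

/-- `N` extended to `ℤ`, vanishing on negative arguments. -/
def NZ (x : ℤ) : ℤ := if 0 ≤ x then N x.toNat else 0

/-- Number of partitions of `n` with positive rank. -/
def R (n : ℕ) : ℕ := Nat.card {l : Nat.Partition n // 0 < rank l}

/-- `R` extended to `ℤ`, vanishing on negative arguments. -/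
def RZ (x : ℤ) : ℤ := if 0 ≤ x then R x.toNat else 0

/-- Number of Garden of Eden partitions of `n`, i.e. partitions of rank at most `-2`. -/
def G (n : ℕ) : ℕ := Nat.card {l : Nat.Partition n // rank l ≤ -2}

/-- `G` extended to `ℤ`, vanishing on negative arguments. -/
def GZ (x : ℤ) : ℤ := if 0 ≤ x then G x.toNat else 0

/-- The crank of a partition: the largest part if no part equals 1, and otherwise
the number of parts larger than the multiplicity of 1 minus that multiplicity. -/
def crank {n : ℕ} (l : Nat.Partition n) : ℤ :=
  if Multiset.count 1 l.parts = 0 then (l.parts.sup : ℤ)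
  else (Multiset.card (Multiset.filter (fun d => Multiset.count 1 l.parts < d) l.parts) : ℤ)
    - Multiset.count 1 l.parts

/-- Number of partitions of `n` with nonnegative crank. -/
def C (n : ℕ) : ℕ := Nat.card {l : Nat.Partition n // 0 ≤ crank l}

/-- `C` extended to `ℤ`, vanishing on negative arguments. -/
def CZ (x : ℤ) : ℤ := if 0 ≤ x then C x.toNat else 0

/-- Number of partitions of `n` with positive crank. -/
def D (n : ℕ) : ℕ := Nat.card {l : Nat.Partition n // 0 < crank l}

/-- `D` extended to `ℤ`, vanishing on negative arguments. -/
def DZ (x : ℤ) : ℤ := if 0 ≤ x then D x.toNat else 0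

/-- The minimal excludant of a partition: the least positive integer that is not a part. -/
def mex {n : ℕ} (l : Nat.Partition n) : ℕ := sInf {k : ℕ | 0 < k ∧ k ∉ l.parts}

/-!
Write `c i = m * i + r`. Removing one copy of a part `d` from the partitions of `y` containing
it leaves the partitions of `y - d`, so `a_{r,m}(y) = ∑ i, c i * p(y - c i)`.

Dyson's map (subtract one from every part of `λ` and insert the part `ℓ(λ) - k - 1`) is a
bijection from the partitions of `N + k + 1` of rank `≤ -k` onto the partitions of `N` of
rank `≥ -k - 2`. Hence `#{rank ≤ -k}(N + k + 1) = p(N) - #{rank ≤ -k - 3}(N)`, and unrolling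
this from `k = 2` gives `G(y) = ∑ j, (-1)^j p(y - 3(j+1)(j+2)/2)`. Substituting both
expansions, each side of the theorem becomes the finite double sum
`∑ i, ∑ j, (-1)^j c i p(n - c i - 3(j+1)(j+2)/2)`.
-/

namespace Multiset

theorem sup_mem_of_ne_zero {α : Type*} [LinearOrder α] [OrderBot α] {s : Multiset α}
    (hs : s ≠ 0) : s.sup ∈ s := by
  induction s using Multiset.induction_on with
  | empty => exact absurd rfl hs
  | cons a s ih =>
    rw [sup_cons]
    rcases eq_or_ne s 0 with rfl | hs'
    · simp
    · exact sup_ind a s.sup (mem_cons_self a s) (mem_cons_of_mem (ih hs'))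

theorem sum_filter_pos (s : Multiset ℕ) : (s.filter (0 < ·)).sum = s.sum := by
  have hzero : (s.filter (¬ 0 < ·)).sum = 0 :=
    sum_eq_zero fun x hx => by simpa using (mem_filter.1 hx).2
  simpa only [sum_add, hzero, add_zero] using congrArg sum (filter_add_not (0 < ·) s)

theorem sum_map_pred_add_card {s : Multiset ℕ} (hs : ∀ p ∈ s, 0 < p) :
    (s.map (· - 1)).sum + card s = s.sum := by
  calc (s.map (· - 1)).sum + card s = (s.map fun p => p - 1 + 1).sum := by
        simp [sum_map_add, map_const']
    _ = s.sum := by rw [map_congr rfl fun p hp => Nat.sub_add_cancel (hs p hp), map_id']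

theorem card_le_sum_of_pos {s : Multiset ℕ} (hs : ∀ p ∈ s, 0 < p) : card s ≤ s.sum := by
  simpa using card_nsmul_le_sum hs

end Multiset

theorem Nat.Partition.parts_ne_zero {n : ℕ} (l : n.Partition) (hn : n ≠ 0) : l.parts ≠ 0 := by
  rintro h
  exact hn (by simpa [h] using l.parts_sum.symm)

theorem pZ_of_neg {x : ℤ} (hx : x < 0) : pZ x = 0 := if_neg (by omega)

theorem pZ_natCast (n : ℕ) : pZ n = partitionCount n := if_pos n.cast_nonneg

theorem sum_sum_toFinset_parts {M : Type*} [AddCommMonoid M] (f : ℕ → M) (n : ℕ) :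
    ∑ l : n.Partition, ∑ d ∈ l.parts.toFinset, f d =
      ∑ d ∈ Finset.Icc 1 n, partitionCount (n - d) • f d := by
  rw [Finset.sum_comm' (t' := Finset.Icc 1 n) (s' := fun d => {l | d ∈ l.parts})]
  · refine Finset.sum_congr rfl fun d hd => ?_
    obtain ⟨hd1, hdn⟩ := Finset.mem_Icc.1 hd
    rw [Finset.sum_const, partitionCount,
      ← Nat.card_congr (Nat.Partition.partitionWithPartEquiv hd1 hdn), Nat.card_eq_fintype_card,
      Fintype.card_subtype]
  · intro l d
    simp only [Finset.mem_univ, Multiset.mem_toFinset, Finset.mem_filter, Finset.mem_Icc, true_and]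
    exact ⟨fun hd => ⟨hd, l.parts_pos hd, Nat.Partition.le_of_mem_parts hd⟩, fun h => h.1⟩

theorem hasSum_aZ_ite (r m : ℕ) (y : ℤ) :
    HasSum (fun d : ℕ => (if d % m = r then (d : ℤ) else 0) * pZ (y - d)) (aZ r m y) := by
  rcases lt_or_ge y 0 with hy | hy
  · rw [aZ, if_neg (by omega)]
    convert hasSum_zero with d
    rw [pZ_of_neg (by omega), mul_zero]
  lift y to ℕ using hy
  rw [show aZ r m y = ∑ d ∈ Finset.Icc 1 y, (if d % m = r then (d : ℤ) else 0) * pZ (y - d)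
    from ?_]
  · refine hasSum_sum_of_ne_finset_zero fun d hd => ?_
    rcases Nat.eq_zero_or_pos d with rfl | hd0
    · simp
    · rw [pZ_of_neg (by simp only [Finset.mem_Icc, not_and_or] at hd; omega), mul_zero]
  · rw [aZ, if_pos y.cast_nonneg, Int.toNat_natCast, a, sum_sum_toFinset_parts, Nat.cast_sum]
    refine Finset.sum_congr rfl fun d hd => ?_
    rw [← Nat.cast_sub (Finset.mem_Icc.1 hd).2, pZ_natCast]
    split_ifs <;> simp [mul_comm]

theorem hasSum_aZ {r m : ℕ} (h : r < m) (y : ℤ) :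
    HasSum (fun i : ℕ => ((m * i + r : ℕ) : ℤ) * pZ (y - (m * i + r : ℕ))) (aZ r m y) := by
  have hinj : Function.Injective fun i => m * i + r := fun i j hij => by
    simpa [Nat.mul_left_cancel_iff (by omega : 0 < m)] using hij
  refine ((hinj.hasSum_iff fun d hd => ?_).2 (hasSum_aZ_ite r m y)).congr_fun fun i => ?_
  · rw [if_neg fun hdr => hd ⟨d / m, by simpa [hdr] using Nat.div_add_mod d m⟩, zero_mul]
  · simp [Nat.mod_eq_of_lt h]

open Multiset

section DysonMap

variable (k : ℕ) {s t : Multiset ℕ}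

def dysonMap (s : Multiset ℕ) : Multiset ℕ :=
  (s.map (· - 1) + {card s - (k + 1)}).filter (0 < ·)

-- For `t = 0` (where `t.sup = 0` is not a part) this is `k + 1` ones, the preimage of the empty
-- partition.
def dysonMapInv (t : Multiset ℕ) : Multiset ℕ :=
  (t.erase t.sup).map (· + 1) + replicate (t.sup + k + 1 - card (t.erase t.sup)) 1

variable {k}

theorem pos_of_mem_dysonMap {p : ℕ} (hp : p ∈ dysonMap k s) : 0 < p := (mem_filter.1 hp).2

theorem sum_dysonMap (hs : ∀ p ∈ s, 0 < p) (hk : s.sup + k ≤ card s) :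
    (dysonMap k s).sum = s.sum - (k + 1) := by
  have := sum_map_pred_add_card hs
  rw [dysonMap, sum_filter_pos, sum_add, sum_singleton]
  rcases eq_or_ne s 0 with rfl | hne
  · simp
  · have := hs _ (sup_mem_of_ne_zero hne)
    omega

theorem sup_dysonMap (hk : s.sup + k ≤ card s) : (dysonMap k s).sup = card s - (k + 1) := by
  refine le_antisymm (Multiset.sup_le.2 fun b hb => ?_) ?_
  · rcases mem_add.1 (mem_of_mem_filter hb) with hb | hb
    · obtain ⟨p, hp, rfl⟩ := mem_map.1 hb
      have := le_sup hp
      omega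
    · rw [mem_singleton.1 hb]
  · rcases Nat.eq_zero_or_pos (card s - (k + 1)) with h0 | hpos
    · omega
    · exact le_sup (mem_filter.2 ⟨mem_add.2 (Or.inr (mem_singleton_self _)), hpos⟩)

theorem card_dysonMap_le : card (dysonMap k s) ≤ card s + 1 :=
  (card_le_card (filter_le _ _)).trans (by simp)

theorem card_dysonMap_le_sup_add (hk : s.sup + k ≤ card s) :
    card (dysonMap k s) ≤ (dysonMap k s).sup + (k + 2) := by
  have := card_dysonMap_le (k := k) (s := s)
  rw [sup_dysonMap hk]
  omega

theorem card_erase_sup_le (ht : card t ≤ t.sup + k + 2) :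
    card (t.erase t.sup) ≤ t.sup + k + 1 := by
  rcases eq_or_ne t 0 with rfl | hne
  · simp
  · have := card_erase_add_one (sup_mem_of_ne_zero hne)
    omega

theorem card_dysonMapInv (ht : card t ≤ t.sup + k + 2) :
    card (dysonMapInv k t) = t.sup + k + 1 := by
  have := card_erase_sup_le ht
  rw [dysonMapInv, card_add, card_map, card_replicate]
  omega

theorem sup_dysonMapInv_le : (dysonMapInv k t).sup ≤ t.sup + 1 := by
  refine Multiset.sup_le.2 fun b hb => ?_
  rcases mem_add.1 hb with hb | hb
  · obtain ⟨p, hp, rfl⟩ := mem_map.1 hb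
    exact Nat.add_le_add_right (le_sup (mem_of_mem_erase hp)) 1
  · rw [eq_of_mem_replicate hb]
    omega

theorem sup_add_le_card_dysonMapInv (ht : card t ≤ t.sup + k + 2) :
    (dysonMapInv k t).sup + k ≤ card (dysonMapInv k t) := by
  have := sup_dysonMapInv_le (k := k) (t := t)
  rw [card_dysonMapInv ht]
  omega

theorem pos_of_mem_dysonMapInv {p : ℕ} (hp : p ∈ dysonMapInv k t) : 0 < p := by
  rcases mem_add.1 hp with hp | hp
  · obtain ⟨q, -, rfl⟩ := mem_map.1 hp
    omega
  · rw [eq_of_mem_replicate hp]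
    omega

theorem sum_dysonMapInv (ht : card t ≤ t.sup + k + 2) :
    (dysonMapInv k t).sum = t.sum + (k + 1) := by
  have hcard := card_erase_sup_le ht
  have herase : t.sup + (t.erase t.sup).sum = t.sum := by
    rcases eq_or_ne t 0 with rfl | hne
    · simp
    · exact sum_erase (sup_mem_of_ne_zero hne)
  rw [dysonMapInv, sum_add, sum_replicate, smul_eq_mul, mul_one, sum_map_add, map_const',
    sum_replicate, smul_eq_mul, mul_one, map_id']
  omega

theorem dysonMap_dysonMapInv (ht : ∀ p ∈ t, 0 < p) (hk : card t ≤ t.sup + k + 2) :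
    dysonMap k (dysonMapInv k t) = t := by
  rw [dysonMap, card_dysonMapInv hk, show t.sup + k + 1 - (k + 1) = t.sup by omega, dysonMapInv,
    map_add, map_map, map_replicate]
  simp only [Function.comp_def, Nat.add_sub_cancel, map_id', Nat.sub_self, filter_add,
    filter_singleton]
  rw [filter_eq_self.2 fun p hp => ht p (mem_of_mem_erase hp),
    filter_eq_nil.2 fun p hp => by simp [eq_of_mem_replicate hp], add_zero]
  rcases eq_or_ne t 0 with rfl | hne
  · simp
  · rw [if_pos (ht _ (sup_mem_of_ne_zero hne)), add_comm, singleton_add,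
      cons_erase (sup_mem_of_ne_zero hne)]

theorem dysonMapInv_dysonMap (hs : ∀ p ∈ s, 0 < p) (hk : s.sup + k ≤ card s) (hne : s ≠ 0) :
    dysonMapInv k (dysonMap k s) = s := by
  have hsup := hs _ (sup_mem_of_ne_zero hne)
  set b := card s - (k + 1)
  have hsplit : dysonMap k s = (s.filter (2 ≤ ·)).map (· - 1) + filter (0 < ·) {b} := by
    rw [dysonMap, filter_add, filter_map]
    congr 2
    exact filter_congr fun p hp => by have := hs p hp; simp only [Function.comp_apply]; omega
  have herase : (dysonMap k s).erase b = (s.filter (2 ≤ ·)).map (· - 1) := by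
    rw [hsplit, filter_singleton]
    split_ifs with hb
    · rw [add_comm, singleton_add, erase_cons_head]
    · rw [empty_eq_zero, add_zero, erase_of_notMem]
      intro hmem
      obtain ⟨p, hp, hp0⟩ := mem_map.1 hmem
      have := (mem_filter.1 hp).2
      omega
  have hones : replicate (b + k + 1 - card (s.filter (2 ≤ ·))) 1 = s.filter (¬ 2 ≤ ·) := by
    have hcard := congrArg card (filter_add_not (2 ≤ ·) s)
    rw [card_add] at hcard
    refine (eq_replicate.2 ⟨by omega, fun p hp => ?_⟩).symm
    have := hs p (mem_of_mem_filter hp)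
    have := (mem_filter.1 hp).2
    omega
  have hrestore : (s.filter (2 ≤ ·)).map ((· + 1) ∘ (· - 1)) = s.filter (2 ≤ ·) := by
    conv_rhs => rw [← map_id (s.filter _)]
    exact map_congr rfl fun p hp => Nat.sub_add_cancel (one_le_two.trans (mem_filter.1 hp).2)
  rw [dysonMapInv, sup_dysonMap hk, herase, map_map, card_map, hones, hrestore, filter_add_not]

end DysonMap

theorem rank_le_neg_iff {n : ℕ} (k : ℕ) (l : n.Partition) :
    rank l ≤ -k ↔ l.parts.sup + k ≤ card l.parts := by
  unfold rank
  omega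

theorem neg_le_rank_iff {n : ℕ} (k : ℕ) (l : n.Partition) :
    -((k : ℤ) + 2) ≤ rank l ↔ card l.parts ≤ l.parts.sup + k + 2 := by
  unfold rank
  omega

def dysonEquiv (k N : ℕ) :
    {l : (N + k + 1).Partition // rank l ≤ -k} ≃
      {l : N.Partition // -((k : ℤ) + 2) ≤ rank l} where
  toFun l :=
    have hk := (rank_le_neg_iff k l.1).1 l.2
    ⟨⟨dysonMap k l.1.parts, pos_of_mem_dysonMap, by
        rw [sum_dysonMap (fun _ => l.1.parts_pos) hk, l.1.parts_sum]
        omega⟩,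
      (neg_le_rank_iff k _).2 (card_dysonMap_le_sup_add hk)⟩
  invFun l :=
    have hk := (neg_le_rank_iff k l.1).1 l.2
    ⟨⟨dysonMapInv k l.1.parts, pos_of_mem_dysonMapInv, by
        rw [sum_dysonMapInv hk, l.1.parts_sum, add_assoc]⟩,
      (rank_le_neg_iff k _).2 (sup_add_le_card_dysonMapInv hk)⟩
  left_inv l := Subtype.ext <| Nat.Partition.ext <|
    dysonMapInv_dysonMap (fun _ => l.1.parts_pos) ((rank_le_neg_iff k l.1).1 l.2)
      (l.1.parts_ne_zero (by omega))
  right_inv l := Subtype.ext <| Nat.Partition.ext <|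
    dysonMap_dysonMapInv (fun _ => l.1.parts_pos) ((neg_le_rank_iff k l.1).1 l.2)

theorem card_rank_le_neg_add_card_rank_le_neg (k N : ℕ) :
    Nat.card {l : (N + k + 1).Partition // rank l ≤ -k} +
      Nat.card {l : N.Partition // rank l ≤ -((k : ℤ) + 3)} = partitionCount N := by
  rw [Nat.card_congr ((dysonEquiv k N).trans (Equiv.subtypeEquivRight fun l => by
      show _ ↔ ¬ rank l ≤ -((k : ℤ) + 3)
      omega)), partitionCount, Nat.card_eq_fintype_card, Nat.card_eq_fintype_card,
    Nat.card_eq_fintype_card, Fintype.card_subtype_compl]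
  have := Fintype.card_subtype_le fun l : N.Partition => rank l ≤ -((k : ℤ) + 3)
  omega

theorem lt_of_rank_le_neg {n k : ℕ} (hk : 1 ≤ k) {l : n.Partition} (hl : rank l ≤ -k) :
    k < n := by
  rw [rank_le_neg_iff] at hl
  have hcard : card l.parts ≤ n := (card_le_sum_of_pos fun _ => l.parts_pos).trans_eq l.parts_sum
  rcases eq_or_ne l.parts 0 with h0 | hne
  · have := card_eq_zero.2 h0
    omega
  · have := l.parts_pos (sup_mem_of_ne_zero hne)
    omega

def rankAtMostZ (t x : ℤ) : ℤ :=
  if 0 ≤ x then Nat.card {l : x.toNat.Partition // rank l ≤ t} else 0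

theorem rankAtMostZ_of_neg {t x : ℤ} (hx : x < 0) : rankAtMostZ t x = 0 := if_neg (by omega)

theorem rankAtMostZ_eq_pZ_sub {k : ℕ} (hk : 1 ≤ k) (x : ℤ) :
    rankAtMostZ (-k) x = pZ (x - (k + 1)) - rankAtMostZ (-((k : ℤ) + 3)) (x - (k + 1)) := by
  rcases lt_or_ge x (k + 1) with hx | hx
  · rw [pZ_of_neg (by omega), rankAtMostZ_of_neg (x := x - (k + 1)) (by omega), sub_zero]
    rcases lt_or_ge x 0 with hx0 | hx0
    · exact rankAtMostZ_of_neg hx0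
    · rw [rankAtMostZ, if_pos hx0, Nat.cast_eq_zero, Nat.card_eq_zero]
      exact .inl ⟨fun ⟨l, hl⟩ => by have := lt_of_rank_le_neg hk hl; omega⟩
  · obtain ⟨N, hN⟩ : ∃ N : ℕ, x = N + k + 1 := ⟨(x - (k + 1)).toNat, by omega⟩
    have hN' : x - (k + 1) = N := by omega
    rw [hN', rankAtMostZ, rankAtMostZ, pZ, if_pos (by omega), if_pos (by omega),
      if_pos (by omega), hN, show ((N : ℤ) + k + 1).toNat = N + k + 1 by omega, Int.toNat_natCast,
      ← card_rank_le_neg_add_card_rank_le_neg k N]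
    push_cast
    ring

-- `dysonShift k j = ∑ i ≤ j, (k + 3 i + 1)`: the total shift after `j + 1` steps of
-- `rankAtMostZ_eq_pZ_sub` starting from `k`.
def dysonShift : ℕ → ℕ → ℕ
  | k, 0 => k + 1
  | k, j + 1 => k + 1 + dysonShift (k + 3) j

theorem two_mul_dysonShift (k j : ℕ) : 2 * dysonShift k j = (j + 1) * (2 * k + 3 * j + 2) := by
  induction j generalizing k with
  | zero =>
    rw [dysonShift]
    ring
  | succ j ih =>
    rw [dysonShift, mul_add, ih]
    ring

theorem dysonShift_two (j : ℕ) : dysonShift 2 j = 3 * (j + 1) * (j + 2) / 2 := by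
  have : 2 * dysonShift 2 j = 3 * (j + 1) * (j + 2) := by
    rw [two_mul_dysonShift]
    ring
  omega

theorem lt_dysonShift (k j : ℕ) : j < dysonShift k j := by
  induction j generalizing k with
  | zero => simp [dysonShift]
  | succ j ih =>
    have := ih (k + 3)
    rw [dysonShift]
    omega

theorem hasSum_rankAtMostZ {k : ℕ} (hk : 1 ≤ k) (x : ℤ) :
    HasSum (fun j => (-1 : ℤ) ^ j * pZ (x - dysonShift k j)) (rankAtMostZ (-k) x) := by
  obtain ⟨n, hn⟩ : ∃ n : ℕ, x < n := ⟨x.toNat + 1, by omega⟩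
  induction n generalizing k x with
  | zero =>
    simp only [rankAtMostZ_of_neg (show x < 0 by omega)]
    convert hasSum_zero with j
    rw [pZ_of_neg (by omega), mul_zero]
  | succ n ih =>
    rw [← hasSum_nat_add_iff' 1]
    convert (ih (k := k + 3) (by omega) (x - (k + 1)) (by omega)).neg using 1
    · funext j
      rw [dysonShift, pow_succ]
      push_cast
      ring_nf
    · rw [Finset.sum_range_one, rankAtMostZ_eq_pZ_sub hk, pow_zero, one_mul, dysonShift]
      push_cast
      ring

theorem hasSum_GZ (x : ℤ) :
    HasSum (fun j : ℕ => (-1 : ℤ) ^ j * pZ (x - (3 * (j + 1) * (j + 2) / 2 : ℕ))) (GZ x) := by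
  show HasSum _ (rankAtMostZ (-2) x)
  simpa only [dysonShift_two, Nat.cast_ofNat] using hasSum_rankAtMostZ (k := 2) one_le_two x

/-- Merca, Corollary 6.2(i). -/
theorem a_garden (m n r : ℕ) (h : r < m) :
    (∑' j : ℕ, (-1 : ℤ) ^ j * aZ r m ((n : ℤ) - (3 * (j + 1) * (j + 2) / 2 : ℕ))) =
      ∑' j : ℕ, ((m * j + r : ℕ) : ℤ) * GZ ((n : ℤ) - (m * j + r : ℕ)) := by
  set T : ℕ → ℕ := fun j => 3 * (j + 1) * (j + 2) / 2
  set c : ℕ → ℕ := fun i => m * i + r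
  have hT (j : ℕ) : j ≤ T j := by
    simp only [T, ← dysonShift_two]
    exact (lt_dysonShift 2 j).le
  have hc (i : ℕ) : i ≤ c i := le_add_right (Nat.le_mul_of_pos_left i (by omega))
  have hsummable : Summable (Function.uncurry fun j i =>
      (-1 : ℤ) ^ j * ((c i : ℤ) * pZ (n - T j - c i))) := by
    refine summable_of_ne_finset_zero (s := Finset.range (n + 1) ×ˢ Finset.range (n + 1))
      fun ⟨j, i⟩ hji => ?_
    dsimp only [Function.uncurry_apply_pair]
    have := hT j
    have := hc i
    rw [Finset.mem_product, Finset.mem_range, Finset.mem_range] at hji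
    rw [pZ_of_neg (by omega), mul_zero, mul_zero]
  calc _ = ∑' j, ∑' i, (-1 : ℤ) ^ j * ((c i : ℤ) * pZ (n - T j - c i)) :=
        tsum_congr fun j => (((hasSum_aZ h _).mul_left _).tsum_eq).symm
    _ = ∑' i, ∑' j, (c i : ℤ) * ((-1) ^ j * pZ (n - c i - T j)) := by
        rw [← hsummable.tsum_comm]
        refine tsum_congr fun i => tsum_congr fun j => ?_
        rw [sub_right_comm, mul_left_comm]
    _ = _ := tsum_congr fun i => ((hasSum_GZ _).mul_left _).tsum_eq
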